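/- Define η(u) = u·arctan(1/(2u)) + 2u²·arcsinh²(1/(2u)) and β(u) = 2u·arcsinh(1/(2u)) for u > 0. Then η(u) − β(u)² = 1/(1440 u⁴) + O(1/u⁶) as u → ∞. -/

import Mathlib

/-!
With `x = 1/(2u)` one has `η(u) − β(u)² = 2u² (x arctan x − arsinh² x)`. The Taylor series
`x arctan x = x² − x⁴/3 + x⁶/5 − …` and `arsinh² x = x² − x⁴/3 + 8x⁶/45 − …` agree up to order
four, and their difference `x⁶/45` contributes exactly `1/(1440u⁴)`. The remainder is controlled by
two-sided polynomial bounds on `arctan` and `arsinh`, obtained by integrating polynomial bounds on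
their derivatives `1/(1+t²)` and `1/√(1+t²)`.
-/

open Filter Set Real

lemma le_of_hasDerivAt_le_of_le {f g f' g' : ℝ → ℝ} {a b x : ℝ}
    (hf : ∀ t, HasDerivAt f (f' t) t) (hg : ∀ t, HasDerivAt g (g' t) t)
    (ha : f a ≤ g a) (hderiv : ∀ t ∈ Ico a b, f' t ≤ g' t) (hx : x ∈ Icc a b) :
    f x ≤ g x :=
  image_le_of_deriv_right_le_deriv_boundary (fun t _ => (hf t).continuousAt.continuousWithinAt)
    (fun t _ => (hf t).hasDerivWithinAt) ha (fun t _ => (hg t).continuousAt.continuousWithinAt)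
    (fun t _ => (hg t).hasDerivWithinAt) hderiv hx

section

variable {y : ℝ}

lemma one_div_one_add_le (hy : 0 ≤ y) : 1 / (1 + y) ≤ 1 - y + y ^ 2 := by
  rw [div_le_iff₀ (by positivity)]
  nlinarith [pow_nonneg hy 3]

lemma le_one_div_one_add (hy : 0 ≤ y) : 1 - y + y ^ 2 - y ^ 3 ≤ 1 / (1 + y) := by
  rw [le_div_iff₀ (by positivity)]
  nlinarith [pow_nonneg hy 4]

lemma inv_sqrt_one_add_le (hy : 0 ≤ y) : (√(1 + y))⁻¹ ≤ 1 - y / 2 + 3 * y ^ 2 / 8 := by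
  rw [← sqrt_inv, sqrt_le_left (by nlinarith [sq_nonneg (y - 2 / 3)]), ← one_div,
    div_le_iff₀ (by positivity)]
  -- `(1 - y/2 + 3y²/8)² (1 + y) = 1 + y³ ((3y - 5/2)² + 135/4) / 64`
  nlinarith [mul_nonneg (pow_nonneg hy 3) (sq_nonneg (3 * y - 5 / 2)), pow_nonneg hy 3]

lemma le_inv_sqrt_one_add (hy : 0 ≤ y) (hy' : y ≤ 1 / 4) :
    1 - y / 2 + 3 * y ^ 2 / 8 - y ^ 3 ≤ (√(1 + y))⁻¹ := by
  rw [← sqrt_inv, le_sqrt (by nlinarith [pow_nonneg hy 2]) (by positivity), ← one_div,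
    le_div_iff₀ (by positivity)]
  nlinarith [pow_nonneg hy 3, pow_nonneg hy 4, pow_nonneg hy 5, pow_nonneg hy 6, pow_nonneg hy 7,
    mul_le_mul_of_nonneg_left hy' (pow_nonneg hy 3)]

end

section

variable {x : ℝ}

lemma arctan_le (hx : 0 ≤ x) : arctan x ≤ x - x ^ 3 / 3 + x ^ 5 / 5 := by
  refine le_of_hasDerivAt_le_of_le (g := fun t => t - t ^ 3 / 3 + t ^ 5 / 5) hasDerivAt_arctan
    (fun t => ?_) (by simp) (fun t _ => one_div_one_add_le (sq_nonneg t)) ⟨hx, le_rfl⟩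
  exact (((hasDerivAt_id t).sub ((hasDerivAt_pow 3 t).div_const 3)).add
    ((hasDerivAt_pow 5 t).div_const 5)).congr_deriv (by push_cast; ring)

lemma le_arctan (hx : 0 ≤ x) : x - x ^ 3 / 3 + x ^ 5 / 5 - x ^ 7 / 7 ≤ arctan x := by
  refine le_of_hasDerivAt_le_of_le (f := fun t => t - t ^ 3 / 3 + t ^ 5 / 5 - t ^ 7 / 7)
    (fun t => ?_) hasDerivAt_arctan (by simp) (fun t _ => le_one_div_one_add (sq_nonneg t))
    ⟨hx, le_rfl⟩
  exact ((((hasDerivAt_id t).sub ((hasDerivAt_pow 3 t).div_const 3)).add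
    ((hasDerivAt_pow 5 t).div_const 5)).sub ((hasDerivAt_pow 7 t).div_const 7)).congr_deriv
    (by push_cast; ring)

lemma arsinh_le (hx : 0 ≤ x) : arsinh x ≤ x - x ^ 3 / 6 + 3 * x ^ 5 / 40 := by
  refine le_of_hasDerivAt_le_of_le (g := fun t => t - t ^ 3 / 6 + 3 * t ^ 5 / 40)
    hasDerivAt_arsinh (fun t => ?_) (by simp) (fun t _ => inv_sqrt_one_add_le (sq_nonneg t))
    ⟨hx, le_rfl⟩
  exact (((hasDerivAt_id t).sub ((hasDerivAt_pow 3 t).div_const 6)).add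
    (((hasDerivAt_pow 5 t).const_mul 3).div_const 40)).congr_deriv (by push_cast; ring)

lemma le_arsinh (hx : 0 ≤ x) (hx' : x ≤ 1 / 2) :
    x - x ^ 3 / 6 + 3 * x ^ 5 / 40 - x ^ 7 / 7 ≤ arsinh x := by
  refine le_of_hasDerivAt_le_of_le
    (f := fun t => t - t ^ 3 / 6 + 3 * t ^ 5 / 40 - t ^ 7 / 7) (fun t => ?_) hasDerivAt_arsinh
    (by simp) (fun t ht => le_inv_sqrt_one_add (sq_nonneg t) ?_) ⟨hx, le_rfl⟩
  · exact ((((hasDerivAt_id t).sub ((hasDerivAt_pow 3 t).div_const 6)).add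
      (((hasDerivAt_pow 5 t).const_mul 3).div_const 40)).sub
      ((hasDerivAt_pow 7 t).div_const 7)).congr_deriv (by push_cast; ring)
  · nlinarith [ht.1, ht.2]

lemma abs_mul_arctan_sub_arsinh_sq_sub_le (hx : 0 ≤ x) (hx' : x ≤ 1 / 2) :
    |x * arctan x - arsinh x ^ 2 - x ^ 6 / 45| ≤ x ^ 8 := by
  have hPl : 0 ≤ x - x ^ 3 / 6 + 3 * x ^ 5 / 40 - x ^ 7 / 7 := by
    nlinarith [pow_nonneg hx 5, mul_le_mul_of_nonneg_left (pow_le_pow_left₀ hx hx' 2) hx,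
      mul_le_mul_of_nonneg_left (pow_le_pow_left₀ hx hx' 6) hx]
  have harsinh := le_arsinh hx hx'
  have hsq_upper : arsinh x ^ 2 ≤ (x - x ^ 3 / 6 + 3 * x ^ 5 / 40) ^ 2 :=
    pow_le_pow_left₀ (hPl.trans harsinh) (arsinh_le hx) 2
  have hsq_lower : (x - x ^ 3 / 6 + 3 * x ^ 5 / 40 - x ^ 7 / 7) ^ 2 ≤ arsinh x ^ 2 :=
    pow_le_pow_left₀ hPl harsinh 2
  have hmul_upper := mul_le_mul_of_nonneg_left (arctan_le hx) hx
  have hmul_lower := mul_le_mul_of_nonneg_left (le_arctan hx) hx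
  rw [abs_le]
  constructor <;> nlinarith [pow_nonneg hx 8, pow_nonneg hx 10, pow_nonneg hx 14]

end

/-- Point-target MIMO: `η(u) − β(u)² = 1/(1440u⁴) + O(1/u⁶)` as `u → ∞`. -/
theorem pt_mimo_crb_asymptotics :
    (fun u : ℝ =>
      (u * Real.arctan (1/(2*u)) + 2*u^2 * (Real.arsinh (1/(2*u)))^2)
        - (2*u * Real.arsinh (1/(2*u)))^2
        - 1/(1440*u^4))
      =O[atTop] (fun u : ℝ => 1/u^6) := by
  refine Asymptotics.IsBigO.of_bound (1 / 128) ?_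
  filter_upwards [eventually_ge_atTop 1] with u hu
  have hu0 : 0 < u := by linarith
  set x := 1 / (2 * u) with hx_def
  have hx : 0 ≤ x := by positivity
  have hx' : x ≤ 1 / 2 := by
    rw [hx_def, div_le_div_iff₀ (by positivity) two_pos]
    linarith
  have hrescale : u * arctan x + 2 * u ^ 2 * arsinh x ^ 2 - (2 * u * arsinh x) ^ 2
      - 1 / (1440 * u ^ 4) = 2 * u ^ 2 * (x * arctan x - arsinh x ^ 2 - x ^ 6 / 45) := by
    rw [hx_def]
    field_simp
    ring
  have hbound : 2 * u ^ 2 * x ^ 8 = 1 / 128 * (1 / u ^ 6) := by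
    rw [hx_def]
    field_simp
    ring
  rw [norm_eq_abs, norm_eq_abs, hrescale, abs_mul, abs_of_pos (by positivity : (0 : ℝ) < 1 / u ^ 6),
    abs_of_pos (by positivity : (0 : ℝ) < 2 * u ^ 2), ← hbound]
  exact mul_le_mul_of_nonneg_left (abs_mul_arctan_sub_arsinh_sq_sub_le hx hx') (by positivity)
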